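/- Let s₆ ≈ 2.154 be the unique root in the interval (2,3) of s⁴ − 3s³ + 3s² − 3s + 1 = 0. For every real s with 2 ≤ s ≤ s₆, every instance of the favorite-machine scheduling game on two machines with parameter s, and every allocation x that is a strong equilibrium, the makespan of x is at most (s² − s + 1)/(s² − s) times the optimal makespan. -/

import Mathlib

open Finset

/-- Processing time of job `j` on machine `i` in the favorite-machine model:
`q j` on the favorite machine `f j` and `s * q j` on the other machine. -/
noncomputable def ptime (s : ℝ) {n : ℕ} (q : Fin n → ℝ) (f : Fin n → Fin 2)
    (i : Fin 2) (j : Fin n) : ℝ :=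
  if f j = i then q j else s * q j

/-- Load of machine `i` under allocation `x`. -/
noncomputable def load (s : ℝ) {n : ℕ} (q : Fin n → ℝ) (f : Fin n → Fin 2)
    (x : Fin n → Fin 2) (i : Fin 2) : ℝ :=
  ∑ j ∈ Finset.univ.filter (fun j => x j = i), ptime s q f i j

/-- Makespan (maximum load) of allocation `x`. -/
noncomputable def makespan (s : ℝ) {n : ℕ} (q : Fin n → ℝ) (f : Fin n → Fin 2)
    (x : Fin n → Fin 2) : ℝ :=
  max (load s q f x 0) (load s q f x 1)

/-- The optimal (minimum) makespan over all allocations. -/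
noncomputable def optMakespan (s : ℝ) {n : ℕ} (q : Fin n → ℝ) (f : Fin n → Fin 2) : ℝ :=
  ⨅ y : Fin n → Fin 2, makespan s q f y

/-- Pure Nash equilibrium: no job can move to the other machine and find there
a load smaller than its current cost. -/
def IsNE (s : ℝ) {n : ℕ} (q : Fin n → ℝ) (f : Fin n → Fin 2)
    (x : Fin n → Fin 2) : Prop :=
  ∀ j : Fin n, ∀ i : Fin 2, i ≠ x j →
    load s q f x (x j) ≤ load s q f (Function.update x j i) i

/-- Strong equilibrium: for every deviation `y` differing from `x` on a nonempty
set of jobs, some deviating job does not improve its cost. -/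
def IsSE (s : ℝ) {n : ℕ} (q : Fin n → ℝ) (f : Fin n → Fin 2)
    (x : Fin n → Fin 2) : Prop :=
  ∀ y : Fin n → Fin 2, (∃ j, y j ≠ x j) →
    ∃ j, y j ≠ x j ∧ load s q f x (x j) ≤ load s q f y (y j)

/-!
Suppose the load `ℓ_t` of machine `t` under a strong equilibrium `x` exceeds
`(s² - s + 1)/(s² - s)` times the makespan `O` of an optimal allocation `w`, and let `o` be the
other machine. Applied to the deviation from `x` to `w`, stability gives `ℓ_o ≤ O`, so the gap
`Δ = ℓ_t - ℓ_o` exceeds `O/(s² - s)`. Every coalition that exchanges jobs between the two machines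
contains a job that does not gain, which yields linear inequalities between partial loads.
If `w` moves no job of favourite `o` from `t` to `o`, then `s ℓ_t + ℓ_o ≤ (s + 1) O`.
Otherwise fix such a job `j`: a second such job, or a job that `w` keeps on `t`, leads to a
contradiction with the size of `Δ`; in the remaining case the coalitions of `j` with the
favourite-`t` jobs on `o` and with the favourite-`o` jobs that `w` leaves on `o` give
`(2s - 1) ℓ_t ≤ s² O`. For `2 ≤ s ≤ s₆` each of these bounds contradicts the assumption; the
quartic defining `s₆` is exactly the condition of the last one.
-/

lemma Fin.two_eq_or_eq {t o : Fin 2} (hto : t ≠ o) (i : Fin 2) : i = t ∨ i = o := by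
  omega

section Model

variable {s : ℝ} {n : ℕ} {q : Fin n → ℝ} {f : Fin n → Fin 2}

lemma ptime_of_eq {i : Fin 2} {j : Fin n} (h : f j = i) : ptime s q f i j = q j := if_pos h

lemma ptime_of_ne {i : Fin 2} {j : Fin n} (h : f j ≠ i) : ptime s q f i j = s * q j := if_neg h

lemma sum_ptime_of_forall_eq {i : Fin 2} {S : Finset (Fin n)} (h : ∀ j ∈ S, f j = i) :
    ∑ j ∈ S, ptime s q f i j = ∑ j ∈ S, q j :=
  sum_congr rfl fun j hj => ptime_of_eq (h j hj)

lemma sum_ptime_of_forall_ne {i : Fin 2} {S : Finset (Fin n)} (h : ∀ j ∈ S, f j ≠ i) :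
    ∑ j ∈ S, ptime s q f i j = s * ∑ j ∈ S, q j := by
  rw [mul_sum]
  exact sum_congr rfl fun j hj => ptime_of_ne (h j hj)

lemma ptime_nonneg (hs : 0 ≤ s) {j : Fin n} (hq : 0 ≤ q j) (i : Fin 2) : 0 ≤ ptime s q f i j := by
  unfold ptime
  split
  exacts [hq, mul_nonneg hs hq]

lemma ptime_le_mul_ptime (hs : 1 ≤ s) {j : Fin n} (hq : 0 ≤ q j) (i i' : Fin 2) :
    ptime s q f i' j ≤ s * ptime s q f i j := by
  have h₁ := mul_nonneg (sub_nonneg.2 hs) hq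
  have h₂ := mul_nonneg (sub_nonneg.2 hs) h₁
  unfold ptime
  split_ifs <;> nlinarith

lemma load_nonneg (hs : 0 ≤ s) (hq : ∀ j, 0 ≤ q j) (x : Fin n → Fin 2) (i : Fin 2) :
    0 ≤ load s q f x i :=
  sum_nonneg fun j _ => ptime_nonneg hs (hq j) i

lemma load_le_makespan (x : Fin n → Fin 2) (i : Fin 2) : load s q f x i ≤ makespan s q f x := by
  fin_cases i
  exacts [le_max_left _ _, le_max_right _ _]

variable {y : Fin n → Fin 2} {i : Fin 2} {S T : Finset (Fin n)}

lemma sum_ptime_le_load (hs : 0 ≤ s) (hq : ∀ j, 0 ≤ q j) (hS : ∀ j ∈ S, y j = i) :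
    ∑ j ∈ S, ptime s q f i j ≤ load s q f y i :=
  sum_le_sum_of_subset_of_nonneg (fun j hj => mem_filter.2 ⟨mem_univ j, hS j hj⟩)
    fun j _ _ => ptime_nonneg hs (hq j) i

lemma sum_ptime_add_sum_ptime_le_load (hs : 0 ≤ s) (hq : ∀ j, 0 ≤ q j) (hST : Disjoint S T)
    (hS : ∀ j ∈ S, y j = i) (hT : ∀ j ∈ T, y j = i) :
    ∑ j ∈ S, ptime s q f i j + ∑ j ∈ T, ptime s q f i j ≤ load s q f y i := by
  rw [← sum_union hST]
  refine sum_ptime_le_load hs hq fun j hj => ?_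
  rcases mem_union.1 hj with hj | hj
  exacts [hS j hj, hT j hj]

end Model

section Exchange

variable {s : ℝ} {n : ℕ} {q : Fin n → ℝ} {f : Fin n → Fin 2}

def exchange (x : Fin n → Fin 2) (A B : Finset (Fin n)) (t o : Fin 2) : Fin n → Fin 2 :=
  fun j => if j ∈ A then o else if j ∈ B then t else x j

variable {x : Fin n → Fin 2} {A B : Finset (Fin n)} {t o : Fin 2}

lemma exchange_comm (hto : t ≠ o) (hA : ∀ j ∈ A, x j = t) (hB : ∀ j ∈ B, x j = o) :
    exchange x A B t o = exchange x B A o t := by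
  funext j
  by_cases hjA : j ∈ A
  · have hjB : j ∉ B := fun hjB => hto ((hA j hjA).symm.trans (hB j hjB))
    simp [exchange, hjA, hjB]
  · simp [exchange, hjA]

lemma load_exchange (hto : t ≠ o) (hA : ∀ j ∈ A, x j = t) (hB : ∀ j ∈ B, x j = o) :
    load s q f (exchange x A B t o) t =
      load s q f x t - ∑ j ∈ A, ptime s q f t j + ∑ j ∈ B, ptime s q f t j := by
  simp only [load, sum_filter, ← sum_ite_mem_eq A, ← sum_ite_mem_eq B, ← sum_sub_distrib,
    ← sum_add_distrib]
  refine sum_congr rfl fun j _ => ?_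
  by_cases hjA : j ∈ A
  · have hjB : j ∉ B := fun hjB => hto ((hA j hjA).symm.trans (hB j hjB))
    simp [exchange, hjA, hjB, hA j hjA, hto.symm]
  · by_cases hjB : j ∈ B
    · simp [exchange, hjA, hjB, hB j hjB, hto.symm]
    · simp [exchange, hjA, hjB]

lemma load_exchange' (hto : t ≠ o) (hA : ∀ j ∈ A, x j = t) (hB : ∀ j ∈ B, x j = o) :
    load s q f (exchange x A B t o) o =
      load s q f x o + ∑ j ∈ A, ptime s q f o j - ∑ j ∈ B, ptime s q f o j := by
  rw [exchange_comm hto hA hB, load_exchange hto.symm hB hA]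
  ring

lemma exchange_differences_eq (hto : t ≠ o) (w : Fin n → Fin 2) :
    exchange x (univ.filter fun j => x j = t ∧ w j = o)
      (univ.filter fun j => x j = o ∧ w j = t) t o = w := by
  funext j
  rcases Fin.two_eq_or_eq hto (x j) with hx | hx <;>
    rcases Fin.two_eq_or_eq hto (w j) with hw | hw <;> simp [exchange, hx, hw, hto, hto.symm]

variable (s q f x) (w : Fin n → Fin 2)

lemma load_eq_load_sub_add (hto : t ≠ o) :
    load s q f w t = load s q f x t
      - ∑ j ∈ univ.filter (fun j => x j = t ∧ w j = o), ptime s q f t j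
      + ∑ j ∈ univ.filter (fun j => x j = o ∧ w j = t), ptime s q f t j := by
  conv_lhs => rw [← exchange_differences_eq (x := x) hto w]
  exact load_exchange hto (fun j hj => (mem_filter.1 hj).2.1) fun j hj => (mem_filter.1 hj).2.1

lemma load_eq_load_add_sub (hto : t ≠ o) :
    load s q f w o = load s q f x o
      + ∑ j ∈ univ.filter (fun j => x j = t ∧ w j = o), ptime s q f o j
      - ∑ j ∈ univ.filter (fun j => x j = o ∧ w j = t), ptime s q f o j := by
  conv_lhs => rw [← exchange_differences_eq (x := x) hto w]
  exact load_exchange' hto (fun j hj => (mem_filter.1 hj).2.1) fun j hj => (mem_filter.1 hj).2.1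

lemma load_eq_sum_add_sum_add_sum (hto : t ≠ o) :
    load s q f x o = ∑ j ∈ univ.filter (fun j => x j = o ∧ f j = t), ptime s q f o j
      + ∑ j ∈ univ.filter (fun j => x j = o ∧ w j = o ∧ f j = o), ptime s q f o j
      + ∑ j ∈ univ.filter (fun j => x j = o ∧ w j = t ∧ f j = o), ptime s q f o j := by
  simp only [load, sum_filter, ← sum_add_distrib]
  refine sum_congr rfl fun j _ => ?_
  rcases Fin.two_eq_or_eq hto (x j) with hx | hx <;>
    rcases Fin.two_eq_or_eq hto (w j) with hw | hw <;>
    rcases Fin.two_eq_or_eq hto (f j) with hf | hf <;>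
    simp [hx, hw, hf, hto, hto.symm]

end Exchange

section StrongEquilibrium

variable {s : ℝ} {n : ℕ} {q : Fin n → ℝ} {f x : Fin n → Fin 2} {t o : Fin 2}

lemma IsSE.exchange_blocked (hx : IsSE s q f x) (hto : t ≠ o) {A B : Finset (Fin n)}
    (hA : ∀ j ∈ A, x j = t) (hB : ∀ j ∈ B, x j = o) (hAne : A.Nonempty) :
    load s q f x t ≤ load s q f x o + ∑ j ∈ A, ptime s q f o j - ∑ j ∈ B, ptime s q f o j ∨
      B.Nonempty ∧ load s q f x o ≤
        load s q f x t - ∑ j ∈ A, ptime s q f t j + ∑ j ∈ B, ptime s q f t j := by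
  rw [← load_exchange' hto hA hB, ← load_exchange hto hA hB]
  obtain ⟨j₀, hj₀⟩ := hAne
  obtain ⟨j, hj, hle⟩ :=
    hx (exchange x A B t o) ⟨j₀, by simp [exchange, hj₀, hA j₀ hj₀, hto.symm]⟩
  by_cases hjA : j ∈ A
  · left
    simpa [exchange, hjA, hA j hjA] using hle
  · by_cases hjB : j ∈ B
    · exact .inr ⟨⟨j, hjB⟩, by simpa [exchange, hjA, hjB, hB j hjB] using hle⟩
    · simp [exchange, hjA, hjB] at hj

lemma IsSE.load_le_load_add_ptime (hx : IsSE s q f x) (hto : t ≠ o) {j : Fin n}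
    (hj : x j = t) : load s q f x t ≤ load s q f x o + ptime s q f o j := by
  simpa using hx.exchange_blocked hto (A := {j}) (B := ∅) (by simpa) (by simp)
    ⟨j, mem_singleton_self j⟩

lemma IsSE.exists_load_le (hx : IsSE s q f x) {w : Fin n → Fin 2} {O : ℝ}
    (hw : ∀ i, load s q f w i ≤ O) : ∃ i, load s q f x i ≤ O := by
  by_cases hxw : ∃ j, w j ≠ x j
  · obtain ⟨j, -, hle⟩ := hx w hxw
    exact ⟨x j, hle.trans (hw (w j))⟩
  · simp only [not_exists, not_not] at hxw
    exact ⟨0, by simpa [show w = x from funext hxw] using hw 0⟩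

end StrongEquilibrium

lemma lt_of_quartic_nonpos {s : ℝ} (hs : 2 ≤ s)
    (h : s ^ 4 - 3 * s ^ 3 + 3 * s ^ 2 - 3 * s + 1 ≤ 0) : s < 11 / 5 := by
  nlinarith [mul_nonneg (sub_nonneg.2 hs) (sub_nonneg.2 hs),
    mul_nonneg (mul_nonneg (sub_nonneg.2 hs) (sub_nonneg.2 hs)) (sub_nonneg.2 hs)]

lemma quartic_nonpos_of_le {s s₆ : ℝ} (hs : 2 ≤ s) (hs₆ : s ≤ s₆)
    (hroot : s₆ ^ 4 - 3 * s₆ ^ 3 + 3 * s₆ ^ 2 - 3 * s₆ + 1 = 0) :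
    s ^ 4 - 3 * s ^ 3 + 3 * s ^ 2 - 3 * s + 1 ≤ 0 := by
  have ha := sub_nonneg.2 hs
  have hb := sub_nonneg.2 (hs.trans hs₆)
  -- the divided difference of the quartic between `s` and `s₆`, nonnegative since the quartic is
  -- convex and increasing on `[2, ∞)`
  have hslope : 0 ≤ s ^ 3 + s ^ 2 * s₆ + s * s₆ ^ 2 + s₆ ^ 3 - 3 * (s ^ 2 + s * s₆ + s₆ ^ 2)
      + 3 * (s + s₆) - 3 := by
    nlinarith [mul_nonneg ha hb, mul_nonneg (mul_nonneg ha ha) hb, mul_nonneg ha (mul_nonneg hb hb),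
      mul_nonneg (mul_nonneg ha ha) ha, mul_nonneg (mul_nonneg hb hb) hb]
  nlinarith [mul_nonpos_of_nonpos_of_nonneg (sub_nonpos.2 hs₆) hslope]

structure BoundViolation (s : ℝ) {n : ℕ} (q : Fin n → ℝ) (f x w : Fin n → Fin 2) (O : ℝ)
    (t o : Fin 2) : Prop where
  two_le : 2 ≤ s
  quartic_nonpos : s ^ 4 - 3 * s ^ 3 + 3 * s ^ 2 - 3 * s + 1 ≤ 0
  size_nonneg : ∀ j, 0 ≤ q j
  isSE : IsSE s q f x
  load_le : ∀ i, load s q f w i ≤ O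
  ne : t ≠ o
  lt_load : (s ^ 2 - s + 1) * O < (s ^ 2 - s) * load s q f x t

namespace BoundViolation

variable {s O : ℝ} {n : ℕ} {q : Fin n → ℝ} {f x w : Fin n → Fin 2} {t o : Fin 2}

lemma s_pos (h : BoundViolation s q f x w O t o) : 0 < s := by linarith [h.two_le]

lemma sq_sub_pos (h : BoundViolation s q f x w O t o) : 0 < s ^ 2 - s := by nlinarith [h.two_le]

lemma s_lt (h : BoundViolation s q f x w O t o) : s < 11 / 5 :=
  lt_of_quartic_nonpos h.two_le h.quartic_nonpos

lemma bound_nonneg (h : BoundViolation s q f x w O t o) : 0 ≤ O :=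
  (load_nonneg h.s_pos.le h.size_nonneg w 0).trans (h.load_le 0)

lemma bound_lt_load (h : BoundViolation s q f x w O t o) : O < load s q f x t := by
  nlinarith [h.lt_load, h.sq_sub_pos, h.bound_nonneg]

lemma load_other_le (h : BoundViolation s q f x w O t o) : load s q f x o ≤ O := by
  obtain ⟨i, hi⟩ := h.isSE.exists_load_le h.load_le
  rcases Fin.two_eq_or_eq h.ne i with rfl | rfl
  · exact absurd hi (not_le.2 h.bound_lt_load)
  · exact hi

lemma bound_lt_gap (h : BoundViolation s q f x w O t o) :
    O < (s ^ 2 - s) * (load s q f x t - load s q f x o) := by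
  nlinarith [h.lt_load, mul_le_mul_of_nonneg_left h.load_other_le h.sq_sub_pos.le]

lemma gap_pos (h : BoundViolation s q f x w O t o) : 0 < load s q f x t - load s q f x o :=
  pos_of_mul_pos_right (h.bound_nonneg.trans_lt h.bound_lt_gap) h.sq_sub_pos.le

lemma load_le_load_other_add_size (h : BoundViolation s q f x w O t o) {j : Fin n}
    (hx : x j = t) (hf : f j = o) : load s q f x t ≤ load s q f x o + q j := by
  simpa [ptime_of_eq hf] using h.isSE.load_le_load_add_ptime h.ne hx

lemma load_le_load_other_add (h : BoundViolation s q f x w O t o) :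
    load s q f x t ≤ load s q f x o + O := by
  by_cases hmoved : ∃ j, x j = t ∧ w j = o
  · obtain ⟨j, hjx, hjw⟩ := hmoved
    have hj : ptime s q f o j ≤ load s q f w o := by
      simpa using sum_ptime_le_load h.s_pos.le h.size_nonneg (S := {j}) (by simpa)
    linarith [h.isSE.load_le_load_add_ptime h.ne hjx, h.load_le o]
  · have hkept : ∀ j ∈ univ.filter (fun j => x j = t), w j = t := fun j hj =>
      (Fin.two_eq_or_eq h.ne (w j)).resolve_right fun hw => hmoved ⟨j, (mem_filter.1 hj).2, hw⟩
    have : load s q f x t ≤ load s q f w t := sum_ptime_le_load h.s_pos.le h.size_nonneg hkept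
    linarith [h.load_le t, h.bound_lt_load]

lemma exists_moved_fav_other (h : BoundViolation s q f x w O t o) :
    ∃ j, x j = t ∧ w j = o ∧ f j = o := by
  by_contra! hfav
  have hs := h.s_pos.le
  have hwt := (load_eq_load_sub_add s q f x w h.ne).symm.trans_le (h.load_le t)
  have hwo := (load_eq_load_add_sub s q f x w h.ne).symm.trans_le (h.load_le o)
  set A := univ.filter fun j => x j = t ∧ w j = o
  set B := univ.filter fun j => x j = o ∧ w j = t
  have hfA : ∀ j ∈ A, f j = t := fun j hj =>
    (Fin.two_eq_or_eq h.ne (f j)).resolve_right (hfav j (mem_filter.1 hj).2.1 (mem_filter.1 hj).2.2)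
  rw [sum_ptime_of_forall_eq hfA] at hwt
  rw [sum_ptime_of_forall_ne fun j hj => hfA j hj ▸ h.ne] at hwo
  have hB : ∑ j ∈ B, ptime s q f o j ≤ s * ∑ j ∈ B, ptime s q f t j := by
    rw [mul_sum]
    exact sum_le_sum fun j _ => ptime_le_mul_ptime (by linarith [h.two_le]) (h.size_nonneg j) t o
  have hbound : (s + 1) * load s q f x t ≤ (s + 2) * O := by
    nlinarith [mul_le_mul_of_nonneg_left hwt hs, h.load_le_load_other_add]
  -- `(s + 2)/(s + 1) ≤ (s² - s + 1)/(s² - s)` iff `s² - 2s - 1 ≤ 0`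
  have hs' : s ^ 2 - 2 * s - 1 ≤ 0 := by nlinarith [h.s_lt, h.two_le]
  nlinarith [mul_le_mul_of_nonneg_left hbound h.sq_sub_pos.le,
    mul_lt_mul_of_pos_left h.lt_load (by linarith : (0 : ℝ) < s + 1),
    mul_nonneg h.bound_nonneg (neg_nonneg.2 hs')]

lemma sum_fav_le_sub (h : BoundViolation s q f x w O t o) {j : Fin n} (hx : x j = t)
    (hf : f j = o) :
    ∑ k ∈ univ.filter (fun k => x k = o ∧ f k = t), ptime s q f o k ≤
      q j - (load s q f x t - load s q f x o) := by
  set C := univ.filter fun k => x k = o ∧ f k = t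
  have hCx : ∀ k ∈ C, x k = o := fun k hk => (mem_filter.1 hk).2.1
  have hCo : ∑ k ∈ C, ptime s q f o k ≤ load s q f x o :=
    sum_ptime_le_load h.s_pos.le h.size_nonneg hCx
  have hNE := h.load_le_load_other_add_size hx hf
  rcases h.isSE.exchange_blocked h.ne (A := {j}) (by simpa) hCx ⟨j, mem_singleton_self j⟩
    with hle | ⟨-, hle⟩
  · simp only [sum_singleton, ptime_of_eq hf] at hle
    linarith
  · have hfC : ∀ k ∈ C, f k = t := fun k hk => (mem_filter.1 hk).2.2
    rw [sum_singleton, ptime_of_ne (hf ▸ h.ne.symm), sum_ptime_of_forall_eq hfC] at hle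
    rw [sum_ptime_of_forall_ne fun k hk => hfC k hk ▸ h.ne] at hCo ⊢
    have hc : (s - 1) * (load s q f x t - load s q f x o) ≤ ∑ k ∈ C, q k := by
      nlinarith [mul_nonneg h.s_pos.le (sub_nonneg.2 hNE)]
    nlinarith [mul_le_mul_of_nonneg_left hc h.s_pos.le, h.load_other_le, h.bound_lt_gap]

lemma false_of_two_moved_fav (h : BoundViolation s q f x w O t o) {j k : Fin n} (hjk : j ≠ k)
    (hj : x j = t ∧ w j = o ∧ f j = o) (hk : x k = t ∧ w k = o ∧ f k = o) : False := by
  have hq := h.size_nonneg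
  have hwo := (load_eq_load_add_sub s q f x w h.ne).symm.trans_le (h.load_le o)
  set A := univ.filter fun i => x i = t ∧ w i = o ∧ f i = o
  set B := univ.filter fun i => x i = o ∧ w i = t
  have hAx : ∀ i ∈ A, x i = t := fun i hi => (mem_filter.1 hi).2.1
  have hBx : ∀ i ∈ B, x i = o := fun i hi => (mem_filter.1 hi).2.1
  have hfA : ∀ i ∈ A, f i = o := fun i hi => (mem_filter.1 hi).2.2.2
  have hAmoved : ∑ i ∈ A, ptime s q f o i ≤
      ∑ i ∈ univ.filter (fun i => x i = t ∧ w i = o), ptime s q f o i :=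
    sum_le_sum_of_subset_of_nonneg
      (fun i hi => mem_filter.2 ⟨mem_univ i, (mem_filter.1 hi).2.1, (mem_filter.1 hi).2.2.1⟩)
      fun i _ _ => ptime_nonneg h.s_pos.le (hq i) o
  have hjkA : q j + q k ≤ ∑ i ∈ A, q i := by
    rw [← sum_pair hjk]
    exact sum_le_sum_of_subset_of_nonneg (by simp [insert_subset_iff, A, hj, hk])
      fun i _ _ => hq i
  have hB : ∑ i ∈ B, ptime s q f t i ≤ O :=
    (sum_ptime_le_load h.s_pos.le hq fun i hi => (mem_filter.1 hi).2.2).trans (h.load_le t)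
  have hΔj := h.load_le_load_other_add_size hj.1 hj.2.2
  have hΔk := h.load_le_load_other_add_size hk.1 hk.2.2
  rcases h.isSE.exchange_blocked h.ne hAx hBx ⟨j, by simp [A, hj]⟩ with hle | ⟨-, hle⟩
  · linarith [h.bound_lt_load]
  · rw [sum_ptime_of_forall_ne fun i hi => hfA i hi ▸ h.ne.symm] at hle
    have h2Δ : 2 * (load s q f x t - load s q f x o) ≤ ∑ i ∈ A, q i := by linarith
    have hbound : (2 * s - 1) * (load s q f x t - load s q f x o) ≤ O := by
      nlinarith [mul_le_mul_of_nonneg_left h2Δ h.s_pos.le]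
    -- `2s - 1 ≤ s² - s` iff `s² - 3s + 1 ≤ 0`
    have hs : s ^ 2 - 3 * s + 1 ≤ 0 := by nlinarith [h.s_lt, h.two_le]
    nlinarith [h.bound_lt_gap, mul_nonpos_of_nonpos_of_nonneg hs h.gap_pos.le]

lemma load_other_le_of_fav_other (h : BoundViolation s q f x w O t o) {j : Fin n}
    (hx : x j = t) (hf : f j = o) :
    load s q f x o ≤ load s q f x t - s * q j +
      s * ∑ k ∈ univ.filter (fun k => x k = o ∧ w k = o ∧ f k = o), q k := by
  have hq := h.size_nonneg
  have hLo := load_eq_sum_add_sum_add_sum s q f x w h.ne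
  have hC := h.sum_fav_le_sub hx hf
  set D := univ.filter fun k => x k = o ∧ w k = o ∧ f k = o
  set E := univ.filter fun k => x k = o ∧ w k = t ∧ f k = o
  have hfD : ∀ k ∈ D, f k = o := fun k hk => (mem_filter.1 hk).2.2.2
  have hfE : ∀ k ∈ E, f k = o := fun k hk => (mem_filter.1 hk).2.2.2
  rw [sum_ptime_of_forall_eq hfD, sum_ptime_of_forall_eq hfE] at hLo
  have hE : s * ∑ k ∈ E, q k ≤ O := by
    rw [← sum_ptime_of_forall_ne fun k hk => hfE k hk ▸ h.ne.symm]
    exact (sum_ptime_le_load h.s_pos.le hq fun k hk => (mem_filter.1 hk).2.2.1).trans (h.load_le t)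
  have hjt : ptime s q f t j ≤ load s q f x t := by
    simpa using sum_ptime_le_load h.s_pos.le hq (f := f) (S := {j}) (by simpa)
  rw [ptime_of_ne (hf ▸ h.ne.symm)] at hjt
  rcases h.isSE.exchange_blocked h.ne (A := {j}) (B := D) (by simpa)
    (fun k hk => (mem_filter.1 hk).2.1) ⟨j, mem_singleton_self j⟩ with hle | ⟨-, hle⟩
  · exfalso
    rw [sum_singleton, ptime_of_eq hf, sum_ptime_of_forall_eq hfD] at hle
    have hLt : load s q f x t ≤ 2 * q j - (load s q f x t - load s q f x o) + ∑ k ∈ E, q k := by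
      linarith
    have hbound : (s - 2) * load s q f x t + s * (load s q f x t - load s q f x o) ≤ O := by
      nlinarith [mul_le_mul_of_nonneg_left hLt h.s_pos.le]
    -- contradicts the assumption since `(s - 1)² (s - 2) ≥ 0`
    have hs := sub_nonneg.2 h.two_le
    nlinarith [mul_le_mul_of_nonneg_left hbound h.sq_sub_pos.le,
      mul_le_mul_of_nonneg_left h.lt_load.le hs, mul_lt_mul_of_pos_left h.bound_lt_gap h.s_pos,
      mul_nonneg h.bound_nonneg (mul_nonneg (sq_nonneg (s - 1)) hs)]
  · rwa [sum_singleton, ptime_of_ne (hf ▸ h.ne.symm),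
      sum_ptime_of_forall_ne fun k hk => hfD k hk ▸ h.ne.symm] at hle

lemma false_of_kept (h : BoundViolation s q f x w O t o) {j k : Fin n}
    (hj : x j = t ∧ w j = o ∧ f j = o) (hk : x k = t ∧ w k = t) : False := by
  have hq := h.size_nonneg
  have hs := h.s_pos.le
  have hLo := load_eq_sum_add_sum_add_sum s q f x w h.ne
  have hC := h.sum_fav_le_sub hj.1 hj.2.2
  set D := univ.filter fun i => x i = o ∧ w i = o ∧ f i = o
  set E := univ.filter fun i => x i = o ∧ w i = t ∧ f i = o
  have hfD : ∀ i ∈ D, f i = o := fun i hi => (mem_filter.1 hi).2.2.2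
  have hfE : ∀ i ∈ E, f i = o := fun i hi => (mem_filter.1 hi).2.2.2
  rw [sum_ptime_of_forall_eq hfD, sum_ptime_of_forall_eq hfE] at hLo
  have hWt : ptime s q f t k + s * ∑ i ∈ E, q i ≤ O := by
    rw [← sum_ptime_of_forall_ne fun i hi => hfE i hi ▸ h.ne.symm,
      ← sum_singleton (ptime s q f t) k]
    refine (sum_ptime_add_sum_ptime_le_load hs hq ?_ (by simpa using hk.2)
      fun i hi => (mem_filter.1 hi).2.2.1).trans (h.load_le t)
    simp [E, hk.1, h.ne]
  have hWo : q j + ∑ i ∈ D, q i ≤ O := by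
    rw [← sum_ptime_of_forall_eq hfD, ← ptime_of_eq (s := s) (q := q) hj.2.2,
      ← sum_singleton (ptime s q f o) j]
    refine (sum_ptime_add_sum_ptime_le_load hs hq ?_ (by simpa using hj.2.1)
      fun i hi => (mem_filter.1 hi).2.2.1).trans (h.load_le o)
    simp [D, hj.1, h.ne]
  have hΔ : load s q f x t - load s q f x o ≤ s * ptime s q f t k := by
    linarith [h.isSE.load_le_load_add_ptime h.ne hk.1,
      ptime_le_mul_ptime (s := s) (f := f) (by linarith [h.two_le]) (hq k) t o]
  have hE : load s q f x t - O ≤ ∑ i ∈ E, q i := by linarith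
  have hbound : s ^ 2 * load s q f x t + (load s q f x t - load s q f x o) ≤ (s ^ 2 + s) * O := by
    nlinarith [mul_le_mul_of_nonneg_left hWt hs, mul_le_mul_of_nonneg_left hE (sq_nonneg s)]
  -- contradicts the assumption as long as `s³ - 2s² - 1 ≤ 0`
  have hs' : s ^ 3 - 2 * s ^ 2 - 1 ≤ 0 := by nlinarith [h.s_lt, h.two_le]
  nlinarith [mul_le_mul_of_nonneg_left hbound h.sq_sub_pos.le, h.bound_lt_gap,
    mul_le_mul_of_nonneg_left h.lt_load.le (sq_nonneg s),
    mul_nonneg h.bound_nonneg (neg_nonneg.2 hs')]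

lemma false_of_forall_moved_fav (h : BoundViolation s q f x w O t o) {j : Fin n}
    (hj : x j = t ∧ w j = o ∧ f j = o) (hrest : ∀ k, x k = t → k ≠ j → w k = o ∧ f k = t) :
    False := by
  have hq := h.size_nonneg
  have hs := h.s_pos.le
  have hNE := h.load_le_load_other_add_size hj.1 hj.2.2
  have hDev := h.load_other_le_of_fav_other hj.1 hj.2.2
  set D := univ.filter fun i => x i = o ∧ w i = o ∧ f i = o
  set R := univ.filter fun k => x k = t ∧ k ≠ j
  have hjR : j ∉ R := by simp [R]
  have hR : ∀ k ∈ R, w k = o ∧ f k = t := fun k hk =>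
    hrest k (mem_filter.1 hk).2.1 (mem_filter.1 hk).2.2
  have hLt : load s q f x t ≤ s * q j + ∑ k ∈ R, q k := by
    rw [← ptime_of_ne (s := s) (q := q) (hj.2.2 ▸ h.ne.symm),
      ← sum_ptime_of_forall_eq fun k hk => (hR k hk).2, ← sum_insert hjR]
    refine sum_le_sum_of_subset_of_nonneg (fun k hk => ?_) fun k _ _ => ptime_nonneg hs (hq k) t
    by_cases hkj : k = j
    · simp [hkj]
    · simp [R, hkj, (mem_filter.1 hk).2]
  have hdisj : Disjoint (insert j R) D := by
    refine disjoint_left.2 fun k hk hkD => h.ne ?_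
    rw [← (mem_filter.1 hkD).2.1]
    rcases mem_insert.1 hk with rfl | hk
    exacts [hj.1.symm, (mem_filter.1 hk).2.1.symm]
  have hW := sum_ptime_add_sum_ptime_le_load hs hq (f := f) hdisj
    (fun k hk => (mem_insert.1 hk).elim (· ▸ hj.2.1) fun hk => (hR k hk).1)
    fun i hi => (mem_filter.1 hi).2.2.1
  rw [sum_insert hjR, ptime_of_eq hj.2.2, sum_ptime_of_forall_ne fun k hk => (hR k hk).2 ▸ h.ne,
    sum_ptime_of_forall_eq fun i hi => (mem_filter.1 hi).2.2.2] at hW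
  have hWo : q j + s * ∑ k ∈ R, q k + ∑ i ∈ D, q i ≤ O := hW.trans (h.load_le o)
  have hmid : s ^ 2 * ∑ k ∈ R, q k + (2 * s - 1) * q j ≤ s * O := by
    nlinarith [mul_le_mul_of_nonneg_left hWo hs]
  have hbound : (2 * s - 1) * load s q f x t ≤ s ^ 2 * O := by
    have hcubic : 0 ≤ s ^ 3 - 2 * s + 1 := by nlinarith [h.two_le]
    nlinarith [mul_le_mul_of_nonneg_left hLt (by linarith [h.two_le] : (0 : ℝ) ≤ 2 * s - 1),
      mul_le_mul_of_nonneg_left hmid hs, mul_nonneg hcubic (sum_nonneg fun k (_ : k ∈ R) => hq k)]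
  -- `s²/(2s - 1) ≤ (s² - s + 1)/(s² - s)` is the quartic condition
  nlinarith [mul_le_mul_of_nonneg_left hbound h.sq_sub_pos.le,
    mul_lt_mul_of_pos_left h.lt_load (by linarith [h.two_le] : (0 : ℝ) < 2 * s - 1),
    mul_nonneg h.bound_nonneg (neg_nonneg.2 h.quartic_nonpos)]

lemma false (h : BoundViolation s q f x w O t o) : False := by
  obtain ⟨j, hj⟩ := h.exists_moved_fav_other
  by_cases htwo : ∃ k, (x k = t ∧ w k = o ∧ f k = o) ∧ k ≠ j
  · obtain ⟨k, hk, hkj⟩ := htwo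
    exact h.false_of_two_moved_fav (Ne.symm hkj) hj hk
  by_cases hkept : ∃ k, x k = t ∧ w k = t
  · obtain ⟨k, hk⟩ := hkept
    exact h.false_of_kept hj hk
  refine h.false_of_forall_moved_fav hj fun k hx hkj => ?_
  have hw : w k = o := (Fin.two_eq_or_eq h.ne (w k)).resolve_left fun hw => hkept ⟨k, hx, hw⟩
  exact ⟨hw, (Fin.two_eq_or_eq h.ne (f k)).resolve_right fun hf => htwo ⟨k, ⟨hx, hw, hf⟩, hkj⟩⟩

end BoundViolation

theorem spoa_upper_interval6_general
    (s₆ : ℝ)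
    (hs₆root : s₆^4 - 3*s₆^3 + 3*s₆^2 - 3*s₆ + 1 = 0)
    (s : ℝ) (hs : 2 ≤ s) (hs' : s ≤ s₆)
    {n : ℕ} (q : Fin n → ℝ) (hq : ∀ j, 0 < q j)
    (f : Fin n → Fin 2) (x : Fin n → Fin 2) (hx : IsSE s q f x) :
    makespan s q f x ≤ ((s^2 - s + 1)/(s^2 - s)) * optMakespan s q f := by
  obtain ⟨w, hw⟩ := exists_eq_ciInf_of_finite (f := makespan s q f)
  have hss : 0 < s ^ 2 - s := by nlinarith
  have hload : ∀ t o : Fin 2, t ≠ o →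
      load s q f x t ≤ (s ^ 2 - s + 1) / (s ^ 2 - s) * optMakespan s q f := by
    intro t o hto
    rw [div_mul_eq_mul_div, le_div_iff₀ hss, optMakespan, ← hw, mul_comm]
    by_contra! hlt
    exact BoundViolation.false ⟨hs, quartic_nonpos_of_le hs hs' hs₆root, fun j => (hq j).le, hx,
      load_le_makespan w, hto, hlt⟩
  exact max_le (hload 0 1 (by decide)) (hload 1 0 (by decide))

theorem spoa_upper_interval6
    (s₆ : ℝ) (hs₆lo : 2 < s₆) (hs₆hi : s₆ < 3)
    (hs₆root : s₆^4 - 3*s₆^3 + 3*s₆^2 - 3*s₆ + 1 = 0)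
    (s : ℝ) (hs : 2 ≤ s) (hs' : s ≤ s₆)
    {n : ℕ} (q : Fin n → ℝ) (hq : ∀ j, 0 < q j)
    (f : Fin n → Fin 2) (x : Fin n → Fin 2) (hx : IsSE s q f x) :
    makespan s q f x ≤ ((s^2 - s + 1)/(s^2 - s)) * optMakespan s q f :=
  spoa_upper_interval6_general s₆ hs₆root s hs hs' q hq f x hx
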